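/- Let V be an infinite-dimensional 𝔽₂-vector space with basis B, let n ≥ 3 be odd, and let I be a nonzero vector that is a sum of an even number of elements of B. Then the minimal n-closed subset of V containing I together with all sums of odd numbers of elements of B equals V∖{0}. -/

import Mathlib

/-!
Nonzero vectors form an `n`-closed set, since linearly independent vectors have nonzero sum.
Conversely, let `S` be `n`-closed, containing `I` and the odd vectors, and let `v ≠ 0, I` be even.
Put `u = v + I` and pick `n - 2` basis vectors `eⱼ` outside the supports of `u` and `I`. Then
`w = u + ∑ eⱼ` is odd because `n - 2` is odd, the vectors `I, e₁, …, e_{n-2}, w` of `S` are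
linearly independent because the `eⱼ` are fresh and `I, u` are independent, and their sum is
`I + u = v`.
-/

/-- A subset `S` of an `𝔽₂`-vector space is `n`-closed if it contains the sum of any
`n` linearly independent elements of `S`. -/
def NClosed {V : Type*} [AddCommGroup V] [Module (ZMod 2) V] (n : ℕ) (S : Set V) : Prop :=
  ∀ f : Fin n → V, (∀ i, f i ∈ S) → LinearIndependent (ZMod 2) f → (∑ i, f i) ∈ S

open Submodule

theorem linearIndependent_finCons_add_sum_finCons {K V : Type*} [Field K] [AddCommGroup V]
    [Module K V] {m : ℕ} {P : Submodule K V} {e : Fin m → V} (he : LinearIndependent K e)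
    (hPe : Disjoint P (span K (Set.range e))) {x y : V} (hxP : x ∈ P) (hyP : y ∈ P)
    (hxy : LinearIndependent K ![x, y]) :
    LinearIndependent K (Fin.cons (y + ∑ j, e j) (Fin.cons x e : Fin (m + 1) → V)) := by
  have hsum : ∑ j, e j ∈ span K (Set.range e) := sum_mem fun j _ => subset_span ⟨j, rfl⟩
  have hx : x ∉ span K (Set.range e) := fun hx =>
    hxy.ne_zero 0 (disjoint_def.mp hPe x hxP hx)
  refine (he.finCons hx).finCons ?_
  rw [Fin.range_cons, mem_span_insert]
  rintro ⟨a, z, hz, h⟩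
  have hyx : y - a • x = z - ∑ j, e j := by
    rw [sub_eq_sub_iff_add_eq_add, h, add_comm]
  have h0 : y - a • x = 0 := disjoint_def.mp hPe _ (P.sub_mem hyP (P.smul_mem a hxP))
    (hyx ▸ sub_mem hz hsum)
  exact one_ne_zero (LinearIndependent.pair_iff.mp hxy (-a) 1 (by rw [← h0]; module)).2

section ZModTwo

variable {V : Type*} [AddCommGroup V] [Module (ZMod 2) V]

theorem ZModModule.linearIndependent_pair {x y : V} (hx : x ≠ 0) (hy : y ≠ 0) (hxy : x ≠ y) :
    LinearIndependent (ZMod 2) ![x, y] := by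
  rw [LinearIndependent.pair_iff' hx]
  intro a
  obtain rfl | rfl : a = 0 ∨ a = 1 := by decide +revert
  · simpa using hy.symm
  · simpa using hxy

theorem nClosed_setOf_ne_zero {n : ℕ} (hn : n ≠ 0) : NClosed n {v : V | v ≠ 0} := by
  intro f _ hf hsum
  exact one_ne_zero
    (Fintype.linearIndependent_iff.mp hf (fun _ => 1) (by simpa using hsum) ⟨0, by omega⟩)

namespace Module.Basis

variable {ι : Type*} (b : Basis ι (ZMod 2) V)

theorem sumCoords_eq_card_support (v : V) : b.sumCoords v = (b.repr v).support.card := by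
  show (b.repr v).sum (fun _ => id) = _
  rw [Finsupp.sum, ← nsmul_one, ← Finset.sum_const]
  exact Finset.sum_congr rfl fun i hi =>
    (by decide : ∀ a : ZMod 2, a ≠ 0 → id a = 1) _ (Finsupp.mem_support_iff.mp hi)

theorem odd_card_support_iff (v : V) : Odd (b.repr v).support.card ↔ b.sumCoords v = 1 := by
  rw [sumCoords_eq_card_support, ZMod.natCast_eq_one_iff_odd]

theorem even_card_support_iff (v : V) : Even (b.repr v).support.card ↔ b.sumCoords v = 0 := by
  rw [sumCoords_eq_card_support, ZMod.natCast_eq_zero_iff_even]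

end Module.Basis

theorem Finset.exists_fin_embedding_disjoint {ι : Type*} [Infinite ι] (F : Finset ι) (m : ℕ) :
    ∃ c : Fin m ↪ ι, Disjoint (F : Set ι) (Set.range c) := by
  have hF : (F : Set ι)ᶜ.Infinite := F.finite_toSet.infinite_compl
  refine ⟨(Fin.valEmbedding.trans (hF.natEmbedding _)).trans (.subtype _), ?_⟩
  exact Set.disjoint_right.mpr fun _ ⟨j, hj⟩ => hj ▸ (hF.natEmbedding _ j).2

theorem NClosed.mem_of_even {ι : Type*} [Infinite ι] (b : Module.Basis ι (ZMod 2) V) {m : ℕ}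
    (hm : Odd m) {S : Set V} (hS : NClosed (m + 2) S)
    (hoddS : ∀ v, b.sumCoords v = 1 → v ∈ S) {I : V} (hIS : I ∈ S) (hI : I ≠ 0)
    (hIeven : b.sumCoords I = 0) {v : V} (hv : v ≠ 0) (hvI : v ≠ I)
    (hveven : b.sumCoords v = 0) : v ∈ S := by
  classical
  set u := v + I with hu
  have hu0 : u ≠ 0 := fun h =>
    hvI (by rwa [hu, add_eq_zero_iff_eq_neg, ZModModule.neg_eq_self] at h)
  have huI : u ≠ I := fun h => hv (by rwa [hu, add_eq_right] at h)
  set F := (b.repr I).support ∪ (b.repr u).support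
  obtain ⟨c, hFc⟩ := F.exists_fin_embedding_disjoint m
  set w := u + ∑ j, b (c j) with hw_def
  have hw : b.sumCoords w = 1 := by
    rw [map_add, map_sum, hu, map_add, hveven, hIeven]
    simp only [Module.Basis.sumCoords_self_apply, Finset.sum_const, Finset.card_univ,
      Fintype.card_fin, nsmul_one, zero_add]
    exact ZMod.natCast_eq_one_iff_odd.mpr hm
  have hsum : ∑ i, (Fin.cons w (Fin.cons I (b ∘ c)) : Fin (m + 2) → V) i = v := by
    simp only [Fin.sum_cons, hw_def, hu, Function.comp_apply]
    rw [add_assoc v, add_assoc v, ZModModule.add_self, add_zero]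
  have hmem : ∀ i, (Fin.cons w (Fin.cons I (b ∘ c)) : Fin (m + 2) → V) i ∈ S :=
    Fin.cases (hoddS w hw) (Fin.cases hIS fun j => hoddS _ (b.sumCoords_self_apply (c j)))
  have hli := linearIndependent_finCons_add_sum_finCons (P := span (ZMod 2) (b '' F))
    (b.linearIndependent.comp c c.injective) ?_ ?_ ?_
    (ZModModule.linearIndependent_pair hI hu0 huI.symm)
  · exact hsum ▸ hS _ hmem hli
  · rw [Set.range_comp]
    exact b.linearIndependent.disjoint_span_image hFc
  · exact b.mem_span_image.mpr (by simp [F])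
  · exact b.mem_span_image.mpr (by simp [F])

end ZModTwo

/-- Let `V` be an infinite-dimensional `𝔽₂`-vector space with basis `B`, `n ≥ 3` odd,
and `I ≠ 0` a sum of an even number of elements of `B`. The minimal `n`-closed subset
of `V` containing `I` together with all sums of odd numbers of elements of `B` is
`V ∖ {0}`. -/
theorem nClosure_of_odd_sums_and_even_vector {V : Type*} [AddCommGroup V]
    [Module (ZMod 2) V] {ι : Type*} [Infinite ι] (b : Module.Basis ι (ZMod 2) V)
    (n : ℕ) (hn : 3 ≤ n) (hodd : Odd n)
    (I : V) (hI : I ≠ 0) (hIeven : Even (b.repr I).support.card) :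
    ⋂₀ {S : Set V |
        {I} ∪ {v : V | Odd (b.repr v).support.card} ⊆ S ∧ NClosed n S} =
      {v : V | v ≠ 0} := by
  obtain ⟨m, rfl⟩ : ∃ m, n = m + 2 := ⟨n - 2, by omega⟩
  have hm : Odd m := by simpa [Nat.odd_add] using hodd
  refine (Set.sInter_subset_of_mem ?_).antisymm (Set.subset_sInter ?_)
  · refine ⟨?_, nClosed_setOf_ne_zero (by omega)⟩
    rintro v (rfl | hv) rfl
    · exact hI rfl
    · simp at hv
  · rintro S ⟨hsub, hS⟩ v hv
    by_cases hvodd : Odd (b.repr v).support.card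
    · exact hsub (.inr hvodd)
    by_cases hvI : v = I
    · exact hvI ▸ hsub (.inl rfl)
    have hoddS w (hw : b.sumCoords w = 1) : w ∈ S :=
      hsub (.inr ((b.odd_card_support_iff w).mpr hw))
    exact hS.mem_of_even b hm hoddS (hsub (.inl rfl)) hI ((b.even_card_support_iff I).mp hIeven)
      hv hvI ((b.even_card_support_iff v).mp (Nat.not_odd_iff_even.mp hvodd))
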